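/- arXiv:2412.10012 — 6 statements merged into one kernel-verified Lean document; each statement's English description precedes it below -/
import Mathlib

section
/- Let U be a set, π : U → E a map into a metric space E, and h : U → (0,∞) a function. Define a(x,y) = (dist(π x, π y) + max(h x, h y))/√(h x · h y) − 1 and d¹(x,y) = 2 log(1 + a(x,y)). If π is injective, then d¹ is a metric on U: it is nonnegative, symmetric, vanishes exactly when x = y, and satisfies the triangle inequality. -/
theorem stmt_5 {U E : Type*} [MetricSpace E] (π : U → E) (h : U → ℝ)
    (hinj : Function.Injective π) (hpos : ∀ x, 0 < h x)
    (a d : U → U → ℝ)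
    (ha : ∀ x y, a x y =
      (dist (π x) (π y) + max (h x) (h y)) / Real.sqrt (h x * h y) - 1)
    (hd : ∀ x y, d x y = 2 * Real.log (1 + a x y)) :
    (∀ x y, 0 ≤ d x y) ∧ (∀ x y, d x y = d y x) ∧
    (∀ x y, d x y = 0 ↔ x = y) ∧ (∀ x y z, d x y ≤ d x z + d z y) := by
  have hsq : ∀ x y : U, 0 < Real.sqrt (h x * h y) := fun x y =>
    Real.sqrt_pos.2 (mul_pos (hpos x) (hpos y))
  have hmax : ∀ x y : U, Real.sqrt (h x * h y) ≤ max (h x) (h y) := by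
    intro x y
    rw [show max (h x) (h y) = Real.sqrt (max (h x) (h y) ^ 2) from
      (Real.sqrt_sq (le_max_of_le_left (hpos x).le)).symm]
    apply Real.sqrt_le_sqrt
    nlinarith [le_max_left (h x) (h y), le_max_right (h x) (h y), (hpos x).le, (hpos y).le]
  have heq : ∀ x y, 1 + a x y =
      (dist (π x) (π y) + max (h x) (h y)) / Real.sqrt (h x * h y) := by
    intro x y; rw [ha]; ring
  have hone : ∀ x y : U, 1 ≤ 1 + a x y := by
    intro x y
    rw [heq, le_div_iff₀ (hsq x y)]
    have := hmax x y
    have := dist_nonneg (x := π x) (y := π y)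
    linarith
  have hnn : ∀ x y, 0 ≤ d x y := by
    intro x y; rw [hd]
    have := Real.log_nonneg (hone x y); linarith
  refine ⟨hnn, ?_, ?_, ?_⟩
  · intro x y; rw [hd, hd, ha, ha, dist_comm (π y) (π x), max_comm (h y) (h x), mul_comm (h y) (h x)]
  · intro x y
    constructor
    · intro h0
      rw [hd] at h0
      have hlog : Real.log (1 + a x y) = 0 := by linarith
      have h1 : 1 + a x y = 1 := by
        rcases Real.log_eq_zero.1 hlog with h' | h' | h'
        · linarith [hone x y]
        · exact h'
        · linarith [hone x y]
      rw [heq] at h1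
      have hs := hsq x y
      have h2 : dist (π x) (π y) + max (h x) (h y) = Real.sqrt (h x * h y) := by
        field_simp at h1; linarith
      have h3 : dist (π x) (π y) = 0 := by
        have := hmax x y
        have := dist_nonneg (x := π x) (y := π y)
        linarith
      exact hinj (dist_eq_zero.1 h3)
    · rintro rfl
      rw [hd, ha, dist_self, max_self, zero_add, Real.sqrt_mul_self (hpos x).le,
        div_self (ne_of_gt (hpos x))]
      norm_num
  · intro x y z
    have key : 1 + a x y ≤ (1 + a x z) * (1 + a z y) := by
      rw [heq, heq, heq, div_mul_div_comm,
        div_le_div_iff₀ (hsq x y) (mul_pos (hsq x z) (hsq z y))]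
      have hsz : Real.sqrt (h x * h z) * Real.sqrt (h z * h y)
          = h z * Real.sqrt (h x * h y) := by
        rw [← Real.sqrt_mul (mul_nonneg (hpos x).le (hpos z).le),
          show h x * h z * (h z * h y) = (h z) ^ 2 * (h x * h y) by ring,
          Real.sqrt_mul (sq_nonneg (h z)), Real.sqrt_sq (hpos z).le]
      rw [hsz]
      have hM : max (h x) (h y) * h z ≤ max (h x) (h z) * max (h z) (h y) := by
        rcases max_cases (h x) (h y) with ⟨e, _⟩ | ⟨e, _⟩ <;> rw [e] <;>
          nlinarith [le_max_left (h x) (h z), le_max_right (h x) (h z),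
            le_max_left (h z) (h y), le_max_right (h z) (h y),
            hpos x, hpos y, hpos z]
      have htri := dist_triangle (π x) (π z) (π y)
      have d1 := dist_nonneg (x := π x) (y := π z)
      have d2 := dist_nonneg (x := π z) (y := π y)
      have hz1 : h z ≤ max (h x) (h z) := le_max_right _ _
      have hz2 : h z ≤ max (h z) (h y) := le_max_left _ _
      have hs := (hsq x y).le
      have hin : (dist (π x) (π y) + max (h x) (h y)) * h z ≤
          (dist (π x) (π z) + max (h x) (h z)) * (dist (π z) (π y) + max (h z) (h y)) := by
        nlinarith [mul_le_mul_of_nonneg_right htri (hpos z).le,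
          mul_le_mul_of_nonneg_left hz2 d1, mul_le_mul_of_nonneg_left hz1 d2,
          mul_nonneg d1 d2]
      nlinarith [mul_le_mul_of_nonneg_right hin hs]
    rw [hd, hd, hd]
    have h1 := hone x z
    have h2 := hone z y
    have hlog := Real.log_le_log (by linarith [hone x y] : (0:ℝ) < 1 + a x y) key
    rw [Real.log_mul (by linarith) (by linarith)] at hlog
    linarith
end

section
/- With a(x,y) and d^c(x,y) = 2 log(1 + c·a(x,y)) defined as for d¹ (π injective, h positive), for every c > 0 the function d^c is a quasi-distance: there exists A ≥ 1 such that d^c(x,y) ≤ A(d^c(x,z) + d^c(z,y)) for all x, y, z. -/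
/-!
Put `q(x, y) = 1 + a(x, y) = (dist (π x) (π y) + max (h x) (h y)) / √(h x h y)`. Then `q ≥ 1`
since `√(h x h y) ≤ max (h x) (h y)`, and the triangle inequality for `dist` together with
`max (h x) (h y) * h z ≤ max (h x) (h z) * max (h z) (h y)` makes `q` submultiplicative,
`q(x, y) ≤ q(x, z) q(z, y)`. For `c ≥ 1` the product `(1 + c a(x, z))(1 + c a(z, y))` still
dominates `1 + c a(x, y)`, so `d^c` satisfies the triangle inequality; for `c ≤ 1`, Bernoulli's
inequality `c log (1 + t) ≤ log (1 + c t)` gives the quasi-triangle inequality with constant `1 / c`.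
-/

section

open Real

lemma sqrt_mul_le_max {s t : ℝ} (hs : 0 ≤ s) (ht : 0 ≤ t) : √(s * t) ≤ max s t := by
  rw [sqrt_le_iff]
  exact ⟨le_max_of_le_left hs,
    sq (max s t) ▸ mul_le_mul (le_max_left s t) (le_max_right s t) ht (le_max_of_le_left hs)⟩

lemma max_mul_le_max_mul_max {s t u : ℝ} (hs : 0 ≤ s) (hu : 0 ≤ u) :
    max s t * u ≤ max s u * max u t := by
  rcases le_total s t with hst | hts
  · rw [max_eq_right hst, mul_comm]
    exact mul_le_mul (le_max_right s u) (le_max_right u t) (hs.trans hst) (le_max_of_le_left hs)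
  · rw [max_eq_left hts]
    exact mul_le_mul (le_max_left s u) (le_max_left u t) hu (le_max_of_le_left hs)

section HeightRatio

variable {E : Type*} [PseudoMetricSpace E]

lemma one_le_dist_add_max_div_sqrt (p q : E) {s t : ℝ} (hs : 0 < s) (ht : 0 < t) :
    1 ≤ (dist p q + max s t) / √(s * t) := by
  rw [one_le_div (sqrt_pos.mpr (mul_pos hs ht))]
  linarith [sqrt_mul_le_max hs.le ht.le, dist_nonneg (x := p) (y := q)]

lemma dist_add_max_div_sqrt_le_mul (p q r : E) {s t u : ℝ} (hs : 0 < s) (ht : 0 < t)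
    (hu : 0 < u) :
    (dist p q + max s t) / √(s * t) ≤
      (dist p r + max s u) / √(s * u) * ((dist r q + max u t) / √(u * t)) := by
  have hden : √(s * u) * √(u * t) = u * √(s * t) := by
    rw [← sqrt_mul (mul_pos hs hu).le, show s * u * (u * t) = u * u * (s * t) by ring,
      sqrt_mul (mul_self_nonneg u), sqrt_mul_self hu.le]
  have hst : 0 < √(s * t) := sqrt_pos.mpr (mul_pos hs ht)
  rw [div_mul_div_comm, hden, div_le_div_iff₀ hst (mul_pos hu hst), ← mul_assoc]
  refine mul_le_mul_of_nonneg_right ?_ hst.le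
  have hmax := max_mul_le_max_mul_max (t := t) hs.le hu.le
  have hsu : u ≤ max s u := le_max_right s u
  have hut : u ≤ max u t := le_max_left u t
  nlinarith [dist_triangle p r q, dist_nonneg (x := p) (y := r), dist_nonneg (x := r) (y := q)]

end HeightRatio

lemma mul_log_one_add_le_log_one_add_mul {c t : ℝ} (hc₀ : 0 ≤ c) (hc₁ : c ≤ 1) (ht : 0 ≤ t) :
    c * log (1 + t) ≤ log (1 + c * t) := by
  rw [← log_rpow (by linarith)]
  exact log_le_log (rpow_pos_of_pos (by linarith) c)
    (rpow_one_add_le_one_add_mul_self (by linarith) hc₀ hc₁)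

lemma log_one_add_mul_le_of_one_le {c u v w : ℝ} (hc : 1 ≤ c) (hu : 0 ≤ u) (hv : 0 ≤ v)
    (hw : 0 ≤ w) (huvw : 1 + w ≤ (1 + u) * (1 + v)) :
    log (1 + c * w) ≤ log (1 + c * u) + log (1 + c * v) := by
  rw [← log_mul (by positivity) (by positivity)]
  refine log_le_log (by positivity) ?_
  nlinarith [mul_nonneg (mul_nonneg (sub_nonneg.mpr hc) (by positivity : 0 ≤ c)) (mul_nonneg hu hv)]

lemma mul_log_one_add_mul_le_of_le_one {c u v w : ℝ} (hc₀ : 0 < c) (hc₁ : c ≤ 1) (hu : 0 ≤ u)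
    (hv : 0 ≤ v) (hw : 0 ≤ w) (huvw : 1 + w ≤ (1 + u) * (1 + v)) :
    c * log (1 + c * w) ≤ log (1 + c * u) + log (1 + c * v) := calc
  c * log (1 + c * w) ≤ c * log (1 + w) :=
    mul_le_mul_of_nonneg_left (log_le_log (by positivity) (by nlinarith)) hc₀.le
  _ ≤ c * (log (1 + u) + log (1 + v)) := by
    rw [← log_mul (by positivity) (by positivity)]
    exact mul_le_mul_of_nonneg_left (log_le_log (by positivity) huvw) hc₀.le
  _ ≤ log (1 + c * u) + log (1 + c * v) := by
    rw [mul_add]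
    exact add_le_add (mul_log_one_add_le_log_one_add_mul hc₀.le hc₁ hu)
      (mul_log_one_add_le_log_one_add_mul hc₀.le hc₁ hv)

lemma log_one_add_mul_le_max_mul {c u v w : ℝ} (hc : 0 < c) (hu : 0 ≤ u) (hv : 0 ≤ v)
    (hw : 0 ≤ w) (huvw : 1 + w ≤ (1 + u) * (1 + v)) :
    log (1 + c * w) ≤ max 1 c⁻¹ * (log (1 + c * u) + log (1 + c * v)) := by
  rcases le_total 1 c with hc₁ | hc₁
  · have hsum : 0 ≤ log (1 + c * u) + log (1 + c * v) :=
      add_nonneg (log_nonneg (by nlinarith)) (log_nonneg (by nlinarith))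
    calc log (1 + c * w) ≤ 1 * (log (1 + c * u) + log (1 + c * v)) := by
          rw [one_mul]; exact log_one_add_mul_le_of_one_le hc₁ hu hv hw huvw
      _ ≤ _ := mul_le_mul_of_nonneg_right (le_max_left _ _) hsum
  · rw [max_eq_right (one_le_inv₀ hc |>.mpr hc₁), ← div_eq_inv_mul, le_div_iff₀ hc, mul_comm]
    exact mul_log_one_add_mul_le_of_le_one hc hc₁ hu hv hw huvw

end

theorem stmt_6_general {U E : Type*} [MetricSpace E] (π : U → E) (h : U → ℝ)
    (hpos : ∀ x, 0 < h x)
    (c : ℝ) (hc : 0 < c) (a dc : U → U → ℝ)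
    (ha : ∀ x y, a x y =
      (dist (π x) (π y) + max (h x) (h y)) / Real.sqrt (h x * h y) - 1)
    (hdc : ∀ x y, dc x y = 2 * Real.log (1 + c * a x y)) :
    ∃ A : ℝ, 1 ≤ A ∧ ∀ x y z, dc x y ≤ A * (dc x z + dc z y) := by
  have one_add_a : ∀ x y, 1 + a x y =
      (dist (π x) (π y) + max (h x) (h y)) / √(h x * h y) := fun x y => by rw [ha]; ring
  have a_nonneg : ∀ x y, 0 ≤ a x y := fun x y => by
    linarith [one_add_a x y, one_le_dist_add_max_div_sqrt (π x) (π y) (hpos x) (hpos y)]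
  have a_submul : ∀ x y z, 1 + a x y ≤ (1 + a x z) * (1 + a z y) := fun x y z => by
    simpa only [one_add_a] using
      dist_add_max_div_sqrt_le_mul (π x) (π y) (π z) (hpos x) (hpos y) (hpos z)
  refine ⟨max 1 c⁻¹, le_max_left _ _, fun x y z => ?_⟩
  have hlog := log_one_add_mul_le_max_mul hc (a_nonneg x z) (a_nonneg z y) (a_nonneg x y)
    (a_submul x y z)
  rw [hdc, hdc, hdc]
  linarith

theorem stmt_6 {U E : Type*} [MetricSpace E] (π : U → E) (h : U → ℝ)
    (hinj : Function.Injective π) (hpos : ∀ x, 0 < h x)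
    (c : ℝ) (hc : 0 < c) (a dc : U → U → ℝ)
    (ha : ∀ x y, a x y =
      (dist (π x) (π y) + max (h x) (h y)) / Real.sqrt (h x * h y) - 1)
    (hdc : ∀ x y, dc x y = 2 * Real.log (1 + c * a x y)) :
    ∃ A : ℝ, 1 ≤ A ∧ ∀ x y z, dc x y ≤ A * (dc x z + dc z y) :=
  stmt_6_general π h hpos c hc a dc ha hdc
end

section
/- Let B_r ⊂ ℝ^d be the open Euclidean ball of radius r > 0 centered at the origin. For x ∈ B_r with x ≠ 0 and v ∈ ℝ^d, decompose v = v_N + v_T along x/‖x‖ and its orthogonal complement, and let δ(x) = r − ‖x‖. Then the Beltrami–Klein metric CK_{B_r}(x,v) = (r²‖v_N‖²/((r+‖x‖)²(r−‖x‖)²) + ‖v_T‖²/((r+‖x‖)(r−‖x‖)))^{1/2} satisfies CK_{B_r}(x,v)² ≤ (1 + 3δ(x)/r)·‖v_N‖²/(4δ(x)²) + (1 + δ(x)/r)·‖v_T‖²/(2r·δ(x)). -/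
open scoped RealInnerProductSpace

theorem stmt_8 (d : ℕ) (hd : 1 ≤ d) (r : ℝ) (hr : 0 < r)
    (x v : EuclideanSpace ℝ (Fin d)) (hx : ‖x‖ < r) (hx0 : x ≠ 0) :
    r ^ 2 * ‖⟪v, ‖x‖⁻¹ • x⟫ • (‖x‖⁻¹ • x)‖ ^ 2 / ((r + ‖x‖) ^ 2 * (r - ‖x‖) ^ 2)
      + ‖v - ⟪v, ‖x‖⁻¹ • x⟫ • (‖x‖⁻¹ • x)‖ ^ 2 / ((r + ‖x‖) * (r - ‖x‖))
    ≤ (1 + 3 * (r - ‖x‖) / r) * ‖⟪v, ‖x‖⁻¹ • x⟫ • (‖x‖⁻¹ • x)‖ ^ 2 / (4 * (r - ‖x‖) ^ 2)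
      + (1 + (r - ‖x‖) / r) * ‖v - ⟪v, ‖x‖⁻¹ • x⟫ • (‖x‖⁻¹ • x)‖ ^ 2
        / (2 * r * (r - ‖x‖)) := by
  set s := ‖x‖ with hs
  have hs0 : 0 < s := norm_pos_iff.mpr hx0
  set A := ‖⟪v, ‖x‖⁻¹ • x⟫ • (‖x‖⁻¹ • x)‖ ^ 2 with hA
  set B := ‖v - ⟪v, ‖x‖⁻¹ • x⟫ • (‖x‖⁻¹ • x)‖ ^ 2 with hB
  have hA0 : 0 ≤ A := by positivity
  have hB0 : 0 ≤ B := by positivity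
  have hδ : 0 < r - s := by linarith
  have h1 : r ^ 2 * A / ((r + s) ^ 2 * (r - s) ^ 2)
      ≤ (1 + 3 * (r - s) / r) * A / (4 * (r - s) ^ 2) := by
    rw [div_le_div_iff₀ (by positivity) (by positivity)]
    have key : r ^ 2 * 4 ≤ (1 + 3 * (r - s) / r) * ((r + s) ^ 2) := by
      rw [show (1 + 3 * (r - s) / r) = (4*r - 3*s)/r from by field_simp; ring,
        div_mul_eq_mul_div, le_div_iff₀ hr]
      nlinarith [mul_nonneg hs0.le (mul_nonneg hδ.le (by linarith : (0:ℝ) ≤ 5*r + 3*s))]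
    calc r ^ 2 * A * (4 * (r - s) ^ 2) = (r ^ 2 * 4) * (A * (r - s) ^ 2) := by ring
      _ ≤ ((1 + 3 * (r - s) / r) * (r + s) ^ 2) * (A * (r - s) ^ 2) := by
          apply mul_le_mul_of_nonneg_right key (by positivity)
      _ = (1 + 3 * (r - s) / r) * A * ((r + s) ^ 2 * (r - s) ^ 2) := by ring
  have h2 : B / ((r + s) * (r - s)) ≤ (1 + (r - s) / r) * B / (2 * r * (r - s)) := by
    rw [div_le_div_iff₀ (by positivity) (by positivity)]
    have key : 2 * r ≤ (1 + (r - s) / r) * (r + s) := by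
      rw [show (1 + (r - s) / r) = (2*r - s)/r from by field_simp; ring,
        div_mul_eq_mul_div, le_div_iff₀ hr]
      nlinarith [mul_nonneg hs0.le hδ.le]
    calc B * (2 * r * (r - s)) = (2 * r) * (B * (r - s)) := by ring
      _ ≤ ((1 + (r - s) / r) * (r + s)) * (B * (r - s)) := by
          apply mul_le_mul_of_nonneg_right key (by positivity)
      _ = (1 + (r - s) / r) * B * ((r + s) * (r - s)) := by ring
  linarith
end

section
/- Let 𝔹^d ⊂ ℝ^d (d ≥ 2) be the open unit ball, x ∈ 𝔹^d, and v ∈ ℝ^d nonzero. Let ξ ∈ ∂𝔹^d be a point on the line x + ℝv closest to x, i.e. ‖x − ξ‖ = dist(x, (x + ℝv) ∩ ∂𝔹^d). Then there exists an affine hyperplane H containing x with direction containing v such that dist(x, (x + H') ∩ ∂𝔹^d) ≥ ‖x − ξ‖, where H' is the (d−1)-dimensional linear subspace of directions of H; consequently δ^{(d−1)}_{𝔹^d}(x,v) = δ^{(1)}_{𝔹^d}(x,v), where δ^{(k)}_{𝔹^d}(x,v) = sup over k-dimensional subspaces V containing v of dist(x, (x+V) ∩ ∂𝔹^d). -/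
/-!
Write `x = c • v + p` with `p ⊥ v`, and let `V` be a hyperplane containing `v` with `p ⊥ V`
(normal `p`, or any normal orthogonal to `v` if `p = 0`). The slice `(x + V) ∩ ∂𝔹` is then the
sphere of radius `√(1 - ‖p‖²)` about `p` inside `x + V`, and `p` lies on the line `x + ℝ v`.
By the triangle inequality every point of that slice is at distance at least
`√(1 - ‖p‖²) - ‖c • v‖` from `x`, and this distance is attained on the line, so it is at
least `‖x - ξ‖`. Conversely every slice by a subspace containing `v` contains `ξ`, so both suprema
equal `‖x - ξ‖`.
-/

open RealInnerProductSpace Metric Module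

variable {E : Type*} [NormedAddCommGroup E] [InnerProductSpace ℝ E]

def unitSphereSlice (x : E) (V : Submodule ℝ E) : Set E :=
  {z | ∃ w ∈ V, z = x + w} ∩ {y | ‖y‖ = 1}

lemma unitSphereSlice_span_singleton (x v : E) :
    unitSphereSlice x (ℝ ∙ v) = {z | ∃ t : ℝ, z = x + t • v} ∩ {y | ‖y‖ = 1} := by
  ext z
  simp only [unitSphereSlice, Set.mem_inter_iff, Set.mem_ofPred_eq, Submodule.mem_span_singleton]
  constructor
  · rintro ⟨⟨_, ⟨t, rfl⟩, rfl⟩, hz⟩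
    exact ⟨⟨t, rfl⟩, hz⟩
  · rintro ⟨⟨t, rfl⟩, hz⟩
    exact ⟨⟨t • v, ⟨t, rfl⟩, rfl⟩, hz⟩

lemma sqrt_sub_norm_le_dist_of_mem_unitSphereSlice {V : Submodule ℝ E} {p q y : E}
    (hp : p ∈ Vᗮ) (hq : q ∈ V) (hy : y ∈ unitSphereSlice (q + p) V) :
    √(1 - ‖p‖ ^ 2) - ‖q‖ ≤ dist (q + p) y := by
  obtain ⟨⟨w, hw, rfl⟩, hy⟩ := hy
  have hpyth : ‖q + p + w‖ ^ 2 = ‖p‖ ^ 2 + ‖q + w‖ ^ 2 := by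
    rw [add_right_comm, add_comm, norm_add_sq_real,
      Submodule.inner_left_of_mem_orthogonal (V.add_mem hq hw) hp, mul_zero, add_zero]
  have hqw : ‖q + w‖ = √(1 - ‖p‖ ^ 2) := by
    rw [← Real.sqrt_sq (norm_nonneg (q + w))]
    congr 1
    rw [Set.mem_ofPred_eq] at hy
    rw [hy] at hpyth
    linarith
  rw [dist_eq_norm, ← hqw]
  calc ‖q + w‖ - ‖q‖ ≤ ‖w‖ := by simpa using norm_sub_norm_le (q + w) q
    _ = ‖q + p - (q + p + w)‖ := by rw [sub_add_cancel_left, norm_neg]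

lemma infDist_unitSphereSlice_span_singleton_le {p v : E} {c : ℝ} (hpv : ⟪p, v⟫ = 0)
    (hv : v ≠ 0) (hx : ‖c • v + p‖ ≤ 1) :
    infDist (c • v + p) (unitSphereSlice (c • v + p) (ℝ ∙ v)) ≤ √(1 - ‖p‖ ^ 2) - ‖c • v‖ := by
  wlog hc : 0 ≤ c generalizing v c
  · have := this (v := -v) (c := -c) (by rw [inner_neg_right, hpv, neg_zero]) (neg_ne_zero.mpr hv)
      (by rwa [neg_smul_neg]) (by linarith)
    rwa [neg_smul_neg, ← Set.neg_singleton, Submodule.span_neg] at this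
  have hvpos : 0 < ‖v‖ := norm_pos_iff.mpr hv
  set r := √(1 - ‖p‖ ^ 2)
  have hpyth (t : ℝ) : ‖t • v + p‖ ^ 2 = (t * ‖v‖) ^ 2 + ‖p‖ ^ 2 := by
    rw [norm_add_sq_real, real_inner_smul_left, real_inner_comm, hpv, mul_zero, mul_zero, add_zero,
      norm_smul, Real.norm_eq_abs, mul_pow, sq_abs, mul_pow]
  have hp : ‖p‖ ^ 2 ≤ 1 := by nlinarith [hpyth c, norm_nonneg (c • v + p)]
  have hcr : c * ‖v‖ ≤ r := Real.le_sqrt_of_sq_le (by nlinarith [hpyth c, norm_nonneg (c • v + p)])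
  have hr : (r / ‖v‖) * ‖v‖ = r := div_mul_cancel₀ r hvpos.ne'
  -- the endpoint of the chord on the same side of its midpoint `p` as `c • v + p`
  have hmem : (r / ‖v‖) • v + p ∈ unitSphereSlice (c • v + p) (ℝ ∙ v) := by
    refine ⟨⟨(r / ‖v‖ - c) • v, Submodule.smul_mem _ _ (Submodule.mem_span_singleton_self v),
      by rw [sub_smul]; abel⟩, ?_⟩
    rw [Set.mem_ofPred_eq, ← pow_eq_one_iff_of_nonneg (norm_nonneg _) two_ne_zero, hpyth, hr,
      Real.sq_sqrt (by linarith)]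
    ring
  calc infDist (c • v + p) _ ≤ dist (c • v + p) ((r / ‖v‖) • v + p) := infDist_le_dist_of_mem hmem
    _ = r - ‖c • v‖ := by
      rw [dist_add_right, dist_eq_norm, ← sub_smul, norm_smul, norm_smul, Real.norm_eq_abs,
        Real.norm_eq_abs, abs_of_nonneg hc, abs_of_nonpos, neg_sub, sub_mul, hr]
      rw [sub_nonpos, le_div_iff₀ hvpos]
      exact hcr

lemma exists_hyperplane_mem_orthogonal_mem [FiniteDimensional ℝ E] (hE : 2 ≤ finrank ℝ E)
    {p v : E} (hpv : ⟪p, v⟫ = 0) :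
    ∃ V : Submodule ℝ E, finrank ℝ V = finrank ℝ E - 1 ∧ v ∈ V ∧ p ∈ Vᗮ := by
  obtain ⟨u, hu0, huv, hpu⟩ : ∃ u : E, u ≠ 0 ∧ ⟪u, v⟫ = 0 ∧ p ∈ ℝ ∙ u := by
    by_cases hp : p = 0
    · have hdim : 0 < finrank ℝ (ℝ ∙ v)ᗮ := by
        have := (ℝ ∙ v).finrank_add_finrank_orthogonal
        have : finrank ℝ (ℝ ∙ v) ≤ 1 := (finrank_span_le_card {v}).trans (by simp)
        omega
      obtain ⟨⟨u, hu⟩, hu0⟩ := finrank_pos_iff_exists_ne_zero.mp hdim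
      exact ⟨u, by simpa using hu0, Submodule.mem_orthogonal_singleton_iff_inner_left.mp hu,
        hp ▸ Submodule.zero_mem _⟩
    · exact ⟨p, hp, hpv, Submodule.mem_span_singleton_self p⟩
  refine ⟨(ℝ ∙ u)ᗮ, Submodule.finrank_add_finrank_orthogonal' ?_,
    Submodule.mem_orthogonal_singleton_iff_inner_right.mpr huv,
    by rwa [Submodule.orthogonal_orthogonal]⟩
  rw [finrank_span_singleton hu0]
  omega

lemma biSup_eq_of_le_of_mem {ι : Type*} {S : Set ι} {f : ι → ℝ} {a : ℝ} (ha : 0 ≤ a)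
    (hle : ∀ i ∈ S, f i ≤ a) {i₀ : ι} (hi₀ : i₀ ∈ S) (hge : a ≤ f i₀) :
    ⨆ i ∈ S, f i = a := by
  refine le_antisymm (Real.iSup_le (fun i => Real.iSup_le (hle i) ha) ha) (hge.trans ?_)
  refine le_ciSup₂ (f := fun i _ => f i) ⟨a, ?_⟩ i₀ hi₀
  simp only [mem_upperBounds, Set.mem_iUnion, Set.mem_range]
  rintro _ ⟨i, hi, rfl⟩
  exact hle i hi

theorem stmt_11 (d : ℕ) (hd : 2 ≤ d) (x v ξ : EuclideanSpace ℝ (Fin d))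
    (hx : ‖x‖ < 1) (hv : v ≠ 0)
    (hξs : ‖ξ‖ = 1) (hξl : ∃ t : ℝ, ξ = x + t • v)
    (hξd : ‖x - ξ‖ = Metric.infDist x
      ({z : EuclideanSpace ℝ (Fin d) | ∃ t : ℝ, z = x + t • v} ∩ {y | ‖y‖ = 1})) :
    (∃ V : Submodule ℝ (EuclideanSpace ℝ (Fin d)),
      Module.finrank ℝ V = d - 1 ∧ v ∈ V ∧
      ‖x - ξ‖ ≤ Metric.infDist x
        ({z : EuclideanSpace ℝ (Fin d) | ∃ w ∈ V, z = x + w} ∩ {y | ‖y‖ = 1})) ∧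
    (⨆ V ∈ {V : Submodule ℝ (EuclideanSpace ℝ (Fin d)) |
        Module.finrank ℝ V = d - 1 ∧ v ∈ V},
      Metric.infDist x ({z : EuclideanSpace ℝ (Fin d) | ∃ w ∈ V, z = x + w} ∩ {y | ‖y‖ = 1}))
    = ⨆ V ∈ {V : Submodule ℝ (EuclideanSpace ℝ (Fin d)) |
        Module.finrank ℝ V = 1 ∧ v ∈ V},
      Metric.infDist x
        ({z : EuclideanSpace ℝ (Fin d) | ∃ w ∈ V, z = x + w} ∩ {y | ‖y‖ = 1}) := by
  rw [← unitSphereSlice_span_singleton] at hξd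
  obtain ⟨t, hξ⟩ := hξl
  have hξW (W : Submodule ℝ _) (hvW : v ∈ W) : ξ ∈ unitSphereSlice x W :=
    ⟨⟨t • v, W.smul_mem t hvW, hξ⟩, hξs⟩
  have hupper (W : Submodule ℝ _) (hvW : v ∈ W) : infDist x (unitSphereSlice x W) ≤ ‖x - ξ‖ :=
    (infDist_le_dist_of_mem (hξW W hvW)).trans_eq (dist_eq_norm x ξ)
  obtain ⟨_, hq, p, hp, hx_eq⟩ := (ℝ ∙ v).exists_add_mem_mem_orthogonal x
  obtain ⟨c, rfl⟩ := Submodule.mem_span_singleton.mp hq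
  have hpv : ⟪p, v⟫ = 0 :=
    Submodule.inner_left_of_mem_orthogonal (Submodule.mem_span_singleton_self v) hp
  obtain ⟨V, hVdim, hvV, hpV⟩ :=
    exists_hyperplane_mem_orthogonal_mem (by rwa [finrank_euclideanSpace_fin]) hpv
  rw [finrank_euclideanSpace_fin] at hVdim
  have hlower : ‖x - ξ‖ ≤ infDist x (unitSphereSlice x V) := by
    refine (le_infDist ⟨ξ, hξW V hvV⟩).mpr fun y hy => ?_
    subst hx_eq
    calc ‖c • v + p - ξ‖ ≤ √(1 - ‖p‖ ^ 2) - ‖c • v‖ :=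
          hξd.trans_le (infDist_unitSphereSlice_span_singleton_le hpv hv hx.le)
      _ ≤ dist (c • v + p) y :=
          sqrt_sub_norm_le_dist_of_mem_unitSphereSlice hpV (V.smul_mem c hvV) hy
  refine ⟨⟨V, hVdim, hvV, hlower⟩, ?_⟩
  change ⨆ W ∈ _, infDist x (unitSphereSlice x W) = ⨆ W ∈ _, infDist x (unitSphereSlice x W)
  have hsup (P : Submodule ℝ (EuclideanSpace ℝ (Fin d)) → Prop) (W₀ : Submodule ℝ _)
      (hW₀ : P W₀ ∧ v ∈ W₀) (hge : ‖x - ξ‖ ≤ infDist x (unitSphereSlice x W₀)) :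
      ⨆ W ∈ {W | P W ∧ v ∈ W}, infDist x (unitSphereSlice x W) = ‖x - ξ‖ :=
    biSup_eq_of_le_of_mem (norm_nonneg _) (fun W hW => hupper W hW.2) hW₀ hge
  rw [hsup _ V ⟨hVdim, hvV⟩ hlower,
    hsup _ _ ⟨finrank_span_singleton hv, Submodule.mem_span_singleton_self v⟩ hξd.le]
end

section
/- Let ℍ^d = {x ∈ ℝ^d : x₁ > 0} be the open half-space, d ≥ 2, k ∈ {1,…,d−1}. For x ∈ ℍ^d and nonzero v ∈ ℝ^d, δ^{(k)}_{ℍ^d}(x,v) := sup{dist(x, (x+V) ∩ ∂ℍ^d) : V a k-dim subspace containing v} satisfies ‖v‖/(2 δ^{(k)}_{ℍ^d}(x,v)) = |v₁|/(2x₁); that is, δ^{(k)}_{ℍ^d}(x,v) = x₁·‖v‖/|v₁| when v₁ ≠ 0, and δ^{(k)}_{ℍ^d}(x,v) = +∞ (so the metric is 0) when v₁ = 0. -/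
/-!
For a slice `x + V` with `v ∈ V` and `ℓ v ≠ 0`, the point `x - (ℓ x / ℓ v) • v` of the line
`x + ℝ v` lies on the hyperplane `{ℓ = 0}`, which bounds the distance by `|ℓ x| ‖v‖ / |ℓ v|`.
The bound is attained by `V = ℝ v ⊕ U` with `U ⊆ ker ℓ ∩ v^⊥` of dimension `k - 1`, which exists
as long as `k < dim E`: writing `w = c v + b` with `b ∈ U`, only `c v` moves `ℓ` while `b` only
lengthens `w`, so `|ℓ w| ‖v‖ ≤ |ℓ v| ‖w‖` on `V`. When `ℓ v = 0`, this `V` lies in `ker ℓ` and the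
slice misses the hyperplane.
-/

open Module Submodule
open scoped ENNReal

theorem Submodule.exists_le_finrank_eq {K V : Type*} [DivisionRing K] [AddCommGroup V]
    [Module K V] (W : Submodule K V) {n : ℕ} (hn : n ≤ finrank K W) :
    ∃ U ≤ W, finrank K U = n := by
  obtain ⟨f, hf⟩ := exists_linearIndependent_of_le_finrank hn
  refine ⟨span K (Set.range (W.subtype ∘ f)), span_le.mpr ?_, ?_⟩
  · rintro _ ⟨j, rfl⟩
    exact (f j).2
  · rw [finrank_span_eq_card (hf.map' W.subtype W.ker_subtype), Fintype.card_fin]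

section

variable {E : Type*} [NormedAddCommGroup E] [InnerProductSpace ℝ E]

/-- `δ^{(k)}(x, v)` for the half-space `{ℓ > 0}`, whose boundary is `{ℓ = 0}`. -/
noncomputable def sliceBoundaryDist (ℓ : Dual ℝ E) (k : ℕ) (x v : E) : ℝ≥0∞ :=
  ⨆ V ∈ {V : Submodule ℝ E | finrank ℝ V = k ∧ v ∈ V},
    Metric.infEDist x ({z : E | ∃ w ∈ V, z = x + w} ∩ {y : E | ℓ y = 0})

theorem abs_apply_mul_norm_le_of_mem_span_sup_ker_inf_orthogonal {ℓ : Dual ℝ E} {v w : E}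
    (hw : w ∈ (ℝ ∙ v) ⊔ (LinearMap.ker ℓ ⊓ (ℝ ∙ v)ᗮ)) : |ℓ w| * ‖v‖ ≤ |ℓ v| * ‖w‖ := by
  obtain ⟨_, hc, b, ⟨hb, hbv⟩, rfl⟩ := mem_sup.mp hw
  obtain ⟨c, rfl⟩ := mem_span_singleton.mp hc
  have hpyth := norm_add_sq_eq_norm_sq_add_norm_sq_real (x := c • v) (y := b) <| by
    rw [real_inner_smul_left, (mem_orthogonal_singleton_iff_inner_right (𝕜 := ℝ)).mp hbv,
      mul_zero]
  have hle : ‖c • v‖ ≤ ‖c • v + b‖ :=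
    (mul_self_le_mul_self_iff (norm_nonneg _) (norm_nonneg _)).mpr <| by
      rw [hpyth]
      exact le_add_of_nonneg_right (mul_self_nonneg _)
  calc |ℓ (c • v + b)| * ‖v‖ = |ℓ v| * ‖c • v‖ := by
        rw [map_add, map_smul, LinearMap.mem_ker.mp hb, add_zero, norm_smul, smul_eq_mul,
          abs_mul, Real.norm_eq_abs]
        ring
    _ ≤ |ℓ v| * ‖c • v + b‖ := by gcongr

theorem infEDist_le_of_mem_of_apply_ne_zero {ℓ : Dual ℝ E} {V : Submodule ℝ E} {v : E} (hvV : v ∈ V)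
    (hv : ℓ v ≠ 0) (x : E) :
    Metric.infEDist x ({z : E | ∃ w ∈ V, z = x + w} ∩ {y : E | ℓ y = 0}) ≤
      ENNReal.ofReal (|ℓ x| * ‖v‖ / |ℓ v|) := by
  have hfoot : x + (-(ℓ x / ℓ v)) • v ∈ {z : E | ∃ w ∈ V, z = x + w} ∩ {y : E | ℓ y = 0} := by
    refine ⟨⟨_, V.smul_mem _ hvV, rfl⟩, ?_⟩
    simp only [Set.mem_ofPred_eq, map_add, map_smul, smul_eq_mul]
    field_simp
    ring
  refine (Metric.infEDist_le_edist_of_mem hfoot).trans_eq ?_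
  rw [edist_dist, dist_self_add_right, norm_smul, Real.norm_eq_abs, abs_neg, abs_div]
  ring_nf

theorem le_infEDist_of_le_span_sup_ker_inf_orthogonal {ℓ : Dual ℝ E} {V : Submodule ℝ E} {v : E}
    (hV : V ≤ (ℝ ∙ v) ⊔ (LinearMap.ker ℓ ⊓ (ℝ ∙ v)ᗮ)) (x : E) :
    ENNReal.ofReal (|ℓ x| * ‖v‖ / |ℓ v|) ≤
      Metric.infEDist x ({z : E | ∃ w ∈ V, z = x + w} ∩ {y : E | ℓ y = 0}) := by
  refine Metric.le_infEDist.mpr ?_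
  rintro _ ⟨⟨w, hw, rfl⟩, hzero⟩
  rw [edist_dist, dist_self_add_right]
  refine ENNReal.ofReal_le_ofReal (div_le_of_le_mul₀ (abs_nonneg _) (norm_nonneg _) ?_)
  have hℓw : ℓ w = -ℓ x := by
    rw [Set.mem_ofPred_eq, map_add] at hzero
    linarith
  simpa [hℓw, mul_comm] using abs_apply_mul_norm_le_of_mem_span_sup_ker_inf_orthogonal (hV hw)

theorem inter_eq_empty_of_le_span_sup_ker_inf_orthogonal {ℓ : Dual ℝ E} {V : Submodule ℝ E}
    {v x : E} (hV : V ≤ (ℝ ∙ v) ⊔ (LinearMap.ker ℓ ⊓ (ℝ ∙ v)ᗮ)) (hv : v ≠ 0) (hℓv : ℓ v = 0)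
    (hx : ℓ x ≠ 0) : {z : E | ∃ w ∈ V, z = x + w} ∩ {y : E | ℓ y = 0} = ∅ := by
  refine Set.eq_empty_of_forall_notMem ?_
  rintro _ ⟨⟨w, hw, rfl⟩, hzero⟩
  have hℓw : ℓ w = 0 := by
    have := abs_apply_mul_norm_le_of_mem_span_sup_ker_inf_orthogonal (hV hw)
    rw [hℓv, abs_zero, zero_mul] at this
    exact abs_eq_zero.mp (le_antisymm
      (nonpos_of_mul_nonpos_left this (norm_pos_iff.mpr hv)) (abs_nonneg _))
  rw [Set.mem_ofPred_eq, map_add, hℓw, add_zero] at hzero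
  exact hx hzero

variable [FiniteDimensional ℝ E]

theorem exists_finrank_eq_mem_le_span_sup_ker_inf_orthogonal (ℓ : Dual ℝ E) {v : E} (hv : v ≠ 0)
    {k : ℕ} (hk1 : 1 ≤ k) (hk2 : k ≤ finrank ℝ E - 1) :
    ∃ V : Submodule ℝ E, finrank ℝ V = k ∧ v ∈ V ∧
      V ≤ (ℝ ∙ v) ⊔ (LinearMap.ker ℓ ⊓ (ℝ ∙ v)ᗮ) := by
  have hker : finrank ℝ E ≤ finrank ℝ (LinearMap.ker ℓ) + 1 := by
    have := LinearMap.finrank_range_add_finrank_ker ℓ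
    have := (LinearMap.range ℓ).finrank_le
    rw [finrank_self] at this
    omega
  have horth : finrank ℝ (ℝ ∙ v)ᗮ + 1 = finrank ℝ E := by
    have := finrank_add_finrank_orthogonal (ℝ ∙ v)
    rw [finrank_span_singleton hv] at this
    omega
  have hW : k - 1 ≤ finrank ℝ (LinearMap.ker ℓ ⊓ (ℝ ∙ v)ᗮ : Submodule ℝ E) := by
    have := finrank_sup_add_finrank_inf_eq (LinearMap.ker ℓ) (ℝ ∙ v)ᗮ
    have := (LinearMap.ker ℓ ⊔ (ℝ ∙ v)ᗮ).finrank_le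
    omega
  obtain ⟨U, hUW, hU⟩ := (LinearMap.ker ℓ ⊓ (ℝ ∙ v)ᗮ).exists_le_finrank_eq hW
  refine ⟨(ℝ ∙ v) ⊔ U, ?_, mem_sup_left (mem_span_singleton_self v), sup_le_sup_left hUW _⟩
  have hdisj : (ℝ ∙ v) ⊓ U = ⊥ :=
    eq_bot_iff.mpr <| (inf_le_inf_left _ (hUW.trans inf_le_right)).trans
      (inf_orthogonal_eq_bot _).le
  have := finrank_sup_add_finrank_inf_eq (ℝ ∙ v) U
  rw [hdisj, finrank_bot, finrank_span_singleton hv, hU] at this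
  omega

theorem sliceBoundaryDist_eq_of_apply_ne_zero (ℓ : Dual ℝ E) {k : ℕ} (hk1 : 1 ≤ k)
    (hk2 : k ≤ finrank ℝ E - 1) {v : E} (hv : ℓ v ≠ 0) (x : E) :
    sliceBoundaryDist ℓ k x v = ENNReal.ofReal (|ℓ x| * ‖v‖ / |ℓ v|) := by
  obtain ⟨V₀, hV₀k, hvV₀, hV₀⟩ := exists_finrank_eq_mem_le_span_sup_ker_inf_orthogonal ℓ (v := v)
    (by rintro rfl; exact hv (map_zero ℓ)) hk1 hk2
  refine le_antisymm (iSup₂_le fun V hV => infEDist_le_of_mem_of_apply_ne_zero hV.2 hv x) ?_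
  exact (le_infEDist_of_le_span_sup_ker_inf_orthogonal hV₀ x).trans
    (le_iSup₂ (f := fun V _ => Metric.infEDist x _) V₀ ⟨hV₀k, hvV₀⟩)

theorem sliceBoundaryDist_eq_top_of_apply_eq_zero (ℓ : Dual ℝ E) {k : ℕ} (hk1 : 1 ≤ k)
    (hk2 : k ≤ finrank ℝ E - 1) {v x : E} (hv : v ≠ 0) (hℓv : ℓ v = 0) (hx : ℓ x ≠ 0) :
    sliceBoundaryDist ℓ k x v = ⊤ := by
  obtain ⟨V₀, hV₀k, hvV₀, hV₀⟩ :=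
    exists_finrank_eq_mem_le_span_sup_ker_inf_orthogonal ℓ hv hk1 hk2
  refine top_le_iff.mp ((le_iSup₂ (f := fun V _ => Metric.infEDist x _) V₀ ⟨hV₀k, hvV₀⟩).trans' ?_)
  rw [inter_eq_empty_of_le_span_sup_ker_inf_orthogonal hV₀ hv hℓv hx, Metric.infEDist_empty]

end

theorem stmt_12 (d k : ℕ) (hd : 2 ≤ d) (hk1 : 1 ≤ k) (hk2 : k ≤ d - 1)
    (x v : EuclideanSpace ℝ (Fin d)) (hv : v ≠ 0)
    (hx : 0 < x ⟨0, by omega⟩) :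
    (v ⟨0, by omega⟩ ≠ 0 →
      (⨆ V ∈ {V : Submodule ℝ (EuclideanSpace ℝ (Fin d)) |
          Module.finrank ℝ V = k ∧ v ∈ V},
        EMetric.infEdist x
          ({z : EuclideanSpace ℝ (Fin d) | ∃ w ∈ V, z = x + w} ∩
            {y : EuclideanSpace ℝ (Fin d) | y ⟨0, by omega⟩ = 0}))
      = ENNReal.ofReal (x ⟨0, by omega⟩ * ‖v‖ / |v ⟨0, by omega⟩|)) ∧
    (v ⟨0, by omega⟩ = 0 →
      (⨆ V ∈ {V : Submodule ℝ (EuclideanSpace ℝ (Fin d)) |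
          Module.finrank ℝ V = k ∧ v ∈ V},
        EMetric.infEdist x
          ({z : EuclideanSpace ℝ (Fin d) | ∃ w ∈ V, z = x + w} ∩
            {y : EuclideanSpace ℝ (Fin d) | y ⟨0, by omega⟩ = 0})) = ⊤) := by
  have hk2' : k ≤ finrank ℝ (EuclideanSpace ℝ (Fin d)) - 1 := by
    rwa [finrank_euclideanSpace_fin]
  let ℓ : Dual ℝ (EuclideanSpace ℝ (Fin d)) := EuclideanSpace.projₗ ⟨0, by omega⟩
  refine ⟨fun hv₁ => ?_, fun hv₁ => ?_⟩
  · have h := sliceBoundaryDist_eq_of_apply_ne_zero ℓ hk1 hk2' hv₁ x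
    rwa [show |ℓ x| = ℓ x from abs_of_pos hx] at h
  · exact sliceBoundaryDist_eq_top_of_apply_eq_zero ℓ hk1 hk2' hv hv₁ hx.ne'
end

section
/- A slab D = {x ∈ ℝ^d : |⟨x − a, v⟩| < 1} (v ≠ 0) satisfies δ^{(1)}_D(x, w) = δ^{(d−1)}_D(x, w) for all x ∈ D and all nonzero w ∈ ℝ^d, where δ^{(k)}_D(x,w) = sup over k-dimensional subspaces V containing w of dist(x, (x+V) ∩ ∂D), with the convention that the distance is +∞ when the intersection is empty. -/
open scoped RealInnerProductSpace

/-!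
Enlarging the subspace `V ∋ w` can only shrink the distance, so `δ⁽ᵈ⁻¹⁾ ≤ δ⁽¹⁾`, and the only line
containing `w` is `ℝ ∙ w`. Conversely, choose a hyperplane `H ∋ w` in which every vector orthogonal
to `w` is also orthogonal to `v`. The boundary of the slab is invariant under translations
orthogonal to `v`, so projecting a point of `(x + H) ∩ ∂D` orthogonally onto `x + ℝ ∙ w` gives a
point of `(x + ℝ ∙ w) ∩ ∂D` that is no farther from `x`.
-/

open Set Module Submodule

theorem sub_mem_frontier_of_preimage_sub_eq {G : Type*} [TopologicalSpace G] [AddGroup G]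
    [IsTopologicalAddGroup G] {S : Set G} {k y : G} (hS : (· - k) ⁻¹' S = S)
    (hy : y ∈ frontier S) : y - k ∈ frontier S := by
  have h := (Homeomorph.subRight k).preimage_frontier S
  rw [Homeomorph.coe_subRight, hS] at h
  exact (h.symm ▸ hy : y ∈ (· - k) ⁻¹' frontier S)

section

variable {E : Type*} [NormedAddCommGroup E] [InnerProductSpace ℝ E]

theorem sub_mem_frontier_slab {a v k y : E} (hk : ⟪k, v⟫ = 0)
    (hy : y ∈ frontier {y : E | |⟪y - a, v⟫| < 1}) :
    y - k ∈ frontier {y : E | |⟪y - a, v⟫| < 1} := by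
  refine sub_mem_frontier_of_preimage_sub_eq ?_ hy
  ext z
  simp only [mem_preimage, mem_ofPred_eq, sub_right_comm z k a, inner_sub_left _ k, hk, sub_zero]

theorem exists_ne_zero_mem_span_singleton {K : Submodule ℝ E} (hK : K ≠ ⊥) {p : E} (hp : p ∈ K) :
    ∃ q ∈ K, q ≠ 0 ∧ p ∈ ℝ ∙ q := by
  by_cases hp0 : p = 0
  · obtain ⟨q, hqK, hq0⟩ := K.ne_bot_iff.mp hK
    exact ⟨q, hqK, hq0, hp0 ▸ zero_mem _⟩
  · exact ⟨p, hp, hp0, mem_span_singleton_self p⟩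

theorem exists_hyperplane_inf_orthogonal_le [FiniteDimensional ℝ E] (hE : 2 ≤ finrank ℝ E)
    (v w : E) :
    ∃ H : Submodule ℝ E, finrank ℝ H = finrank ℝ E - 1 ∧ w ∈ H ∧
      H ⊓ (ℝ ∙ w)ᗮ ≤ (ℝ ∙ v)ᗮ := by
  set K := (ℝ ∙ w)ᗮ
  have hK : K ≠ ⊥ := by
    intro hbot
    have hsum := finrank_add_finrank_orthogonal (𝕜 := ℝ) (ℝ ∙ w)
    have hline := finrank_span_le_card (R := ℝ) ({w} : Set E)
    rw [show (ℝ ∙ w)ᗮ = ⊥ from hbot, finrank_bot] at hsum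
    rw [toFinset_singleton, Finset.card_singleton] at hline
    omega
  -- `K.starProjection v` is the component of `v` that `H ⊓ K` has to be orthogonal to.
  obtain ⟨q, hqK, hq0, hvq⟩ :=
    exists_ne_zero_mem_span_singleton hK (K.starProjection_apply_mem v)
  refine ⟨(ℝ ∙ q)ᗮ, ?_, ?_, ?_⟩
  · have := finrank_add_finrank_orthogonal (𝕜 := ℝ) (ℝ ∙ q)
    rw [finrank_span_singleton hq0] at this
    omega
  · rw [mem_orthogonal_singleton_iff_inner_right, real_inner_comm]
    exact mem_orthogonal_singleton_iff_inner_right.mp hqK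
  · rintro u ⟨huq, huK⟩
    obtain ⟨t, ht⟩ := mem_span_singleton.mp hvq
    rw [mem_orthogonal_singleton_iff_inner_right, real_inner_comm,
      ← K.starProjection_eq_self_iff.mpr huK, inner_starProjection_left_eq_right, ← ht,
      real_inner_smul_right, (mem_orthogonal_singleton_iff_inner_left).mp huq, mul_zero]

theorem infEDist_affine_inter_anti {V W : Submodule ℝ E} (hVW : V ≤ W) (x : E) (F : Set E) :
    Metric.infEDist x ({z | ∃ u ∈ W, z = x + u} ∩ F)
      ≤ Metric.infEDist x ({z | ∃ u ∈ V, z = x + u} ∩ F) := by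
  refine Metric.infEDist_anti (inter_subset_inter_left F ?_)
  rintro z ⟨u, hu, rfl⟩
  exact ⟨u, hVW hu, rfl⟩

theorem infEDist_line_inter_le {V : Submodule ℝ E} {w : E} (hwV : w ∈ V) (x : E) {F : Set E}
    (hF : ∀ y ∈ F, ∀ k ∈ V ⊓ (ℝ ∙ w)ᗮ, y - k ∈ F) :
    Metric.infEDist x ({z | ∃ u ∈ ℝ ∙ w, z = x + u} ∩ F)
      ≤ Metric.infEDist x ({z | ∃ u ∈ V, z = x + u} ∩ F) := by
  refine Metric.le_infEDist.mpr ?_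
  rintro _ ⟨⟨u, huV, rfl⟩, hxuF⟩
  set u' := (ℝ ∙ w).starProjection u
  have hk : u - u' ∈ V ⊓ (ℝ ∙ w)ᗮ :=
    ⟨V.sub_mem huV ((span_singleton_le_iff_mem w V).mpr hwV ((ℝ ∙ w).starProjection_apply_mem u)),
      (ℝ ∙ w).sub_starProjection_mem_orthogonal u⟩
  have hmem : x + u' ∈ {z | ∃ u ∈ ℝ ∙ w, z = x + u} ∩ F :=
    ⟨⟨u', (ℝ ∙ w).starProjection_apply_mem u, rfl⟩,
      by simpa [add_sub_assoc] using hF _ hxuF _ hk⟩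
  refine (Metric.infEDist_le_edist_of_mem hmem).trans ?_
  simp only [edist_dist, dist_self_add_right]
  exact ENNReal.ofReal_le_ofReal ((ℝ ∙ w).norm_starProjection_apply_le u)

end

theorem stmt_16_general (d : ℕ) (hd : 2 ≤ d) (a v : EuclideanSpace ℝ (Fin d))
    (x : EuclideanSpace ℝ (Fin d))
    (w : EuclideanSpace ℝ (Fin d)) (hw : w ≠ 0) :
    (⨆ V ∈ {V : Submodule ℝ (EuclideanSpace ℝ (Fin d)) |
        Module.finrank ℝ V = 1 ∧ w ∈ V},
      EMetric.infEdist x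
        ({z : EuclideanSpace ℝ (Fin d) | ∃ u ∈ V, z = x + u} ∩
          frontier {y : EuclideanSpace ℝ (Fin d) | |⟪y - a, v⟫| < 1}))
    = ⨆ V ∈ {V : Submodule ℝ (EuclideanSpace ℝ (Fin d)) |
        Module.finrank ℝ V = d - 1 ∧ w ∈ V},
      EMetric.infEdist x
        ({z : EuclideanSpace ℝ (Fin d) | ∃ u ∈ V, z = x + u} ∩
          frontier {y : EuclideanSpace ℝ (Fin d) | |⟪y - a, v⟫| < 1}) := by
  have hlines : {V : Submodule ℝ (EuclideanSpace ℝ (Fin d)) | finrank ℝ V = 1 ∧ w ∈ V}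
      = {ℝ ∙ w} := by
    ext V
    exact ⟨fun ⟨hV, hwV⟩ => eq_span_singleton_of_mem_of_finrank_eq_one hV hwV hw,
      fun hV => hV ▸ ⟨finrank_span_singleton hw, mem_span_singleton_self w⟩⟩
  rw [hlines, iSup_singleton]
  apply le_antisymm
  · obtain ⟨H, hH, hwH, hHv⟩ :=
      exists_hyperplane_inf_orthogonal_le (by rwa [finrank_euclideanSpace_fin]) v w
    refine le_iSup₂_of_le H ⟨by rwa [finrank_euclideanSpace_fin] at hH, hwH⟩ ?_
    refine infEDist_line_inter_le hwH x fun y hy k hk => sub_mem_frontier_slab ?_ hy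
    exact real_inner_comm v k ▸ mem_orthogonal_singleton_iff_inner_right.mp (hHv hk)
  · exact iSup₂_le fun V ⟨_, hwV⟩ =>
      infEDist_affine_inter_anti ((span_singleton_le_iff_mem w V).mpr hwV) x _

theorem stmt_16 (d : ℕ) (hd : 2 ≤ d) (a v : EuclideanSpace ℝ (Fin d)) (hv : v ≠ 0)
    (x : EuclideanSpace ℝ (Fin d))
    (hx : x ∈ {y : EuclideanSpace ℝ (Fin d) | |⟪y - a, v⟫| < 1})
    (w : EuclideanSpace ℝ (Fin d)) (hw : w ≠ 0) :
    (⨆ V ∈ {V : Submodule ℝ (EuclideanSpace ℝ (Fin d)) |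
        Module.finrank ℝ V = 1 ∧ w ∈ V},
      EMetric.infEdist x
        ({z : EuclideanSpace ℝ (Fin d) | ∃ u ∈ V, z = x + u} ∩
          frontier {y : EuclideanSpace ℝ (Fin d) | |⟪y - a, v⟫| < 1}))
    = ⨆ V ∈ {V : Submodule ℝ (EuclideanSpace ℝ (Fin d)) |
        Module.finrank ℝ V = d - 1 ∧ w ∈ V},
      EMetric.infEdist x
        ({z : EuclideanSpace ℝ (Fin d) | ∃ u ∈ V, z = x + u} ∩
          frontier {y : EuclideanSpace ℝ (Fin d) | |⟪y - a, v⟫| < 1}) :=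
  stmt_16_general d hd a v x w hw
end
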